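/- Let G be a finite group. The rational Burnside ring B(G) ⊗ ℚ admits a complete set of orthogonal idempotents {u_Γ} indexed by the conjugacy classes of subgroups Γ of G; that is, u_Γ · u_Γ' = 0 for Γ not conjugate to Γ', u_Γ² = u_Γ, and Σ_Γ u_Γ = 1. -/

import Mathlib

open Pointwise Finsupp

noncomputable section

/-- Conjugacy classes of subgroups of `G`. -/
def SubgroupConj (G : Type*) [Group G] : Type _ :=
  Quotient (MulAction.orbitRel (ConjAct G) (Subgroup G))

variable {G : Type*} [Group G]

/-- The conjugacy class of a subgroup. -/
def Subgroup.toConj (K : Subgroup G) : SubgroupConj G :=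
  Quotient.mk (MulAction.orbitRel (ConjAct G) (Subgroup G)) K

/-- A representative of a conjugacy class of subgroups. -/
def SubgroupConj.rep (c : SubgroupConj G) : Subgroup G := Quotient.out c

instance : DecidableEq (SubgroupConj G) := Classical.decEq _

instance [Finite G] : Finite (Subgroup G) :=
  Finite.of_injective (fun H => (H : Set G)) fun _ _ h => SetLike.ext' h

instance [Finite G] : Finite (SubgroupConj G) := Quotient.finite _

noncomputable instance [Finite G] : Fintype (SubgroupConj G) := Fintype.ofFinite _

instance [Finite G] (s t : Set G) : Finite (DoubleCoset.Quotient s t) :=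
  Quotient.finite _

noncomputable instance [Finite G] (s t : Set G) : Fintype (DoubleCoset.Quotient s t) :=
  Fintype.ofFinite _

/-- The conjugate subgroup `g K g⁻¹`. -/
def conjSub (g : G) (K : Subgroup G) : Subgroup G :=
  Subgroup.map (MulAut.conj g).toMonoidHom K

/-- The rational Burnside ring of `G`, as the free `ℚ`-module on the classes `[G/Γ]`. -/
abbrev BQ (G : Type*) [Group G] := SubgroupConj G →₀ ℚ

variable [Finite G]

/-- The double coset formula for the product of two basis elements
`⟨Γ⟩⟨Γ'⟩ = Σ_{g ∈ Γ'\G\Γ} ⟨Γ ∩ g⁻¹ Γ' g⟩`. -/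
def basisMul (c d : SubgroupConj G) : BQ G :=
  ∑ q : DoubleCoset.Quotient (d.rep : Set G) (c.rep : Set G),
    Finsupp.single (Subgroup.toConj (c.rep ⊓ conjSub (Quotient.out q)⁻¹ d.rep)) 1

/-- The multiplication of the Burnside ring in the basis `[G/Γ]`. -/
def mulB (x y : BQ G) : BQ G :=
  x.sum fun c a => y.sum fun d b => (a * b) • basisMul c d

/-- The unit `[G/G]` of the Burnside ring. -/
def oneB : BQ G := Finsupp.single (Subgroup.toConj (⊤ : Subgroup G)) 1

/-- Induction along an (injective) group homomorphism. -/
def indF {H : Type*} [Group H] (f : H →* G) (y : BQ H) : BQ G :=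
  y.sum fun c a => Finsupp.single (Subgroup.toConj (c.rep.map f)) a

/-- Restriction of the basis element `[G/Γ]` along `f : H →* G`:
`Res [G/Γ] = Σ_{g ∈ f(H)\G/Γ} [H / f⁻¹(g Γ g⁻¹)]`. -/
def resBasis {H : Type*} [Group H] (f : H →* G) (c : SubgroupConj G) : BQ H :=
  ∑ q : DoubleCoset.Quotient (f.range : Set G) (c.rep : Set G),
    Finsupp.single (Subgroup.toConj ((conjSub (Quotient.out q) c.rep).comap f)) 1

/-- Restriction along a group homomorphism. -/
def resF {H : Type*} [Group H] (f : H →* G) (x : BQ G) : BQ H :=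
  x.sum fun c a => a • resBasis f c

/-- The mark of the basis element `[G/Γ]` at (the class of) `Δ`: the number of
`Δ`-fixed points of `G/Γ`. -/
def markBasis (c d : SubgroupConj G) : ℚ :=
  (Nat.card {x : G ⧸ c.rep // ∀ k ∈ d.rep, k • x = x} : ℚ)

/-- The mark homomorphism, in the basis `[G/Γ]`. -/
def markMap (x : BQ G) : SubgroupConj G → ℚ :=
  fun d => x.sum fun c a => a * markBasis c d

/-- `x` is the primitive idempotent of `B(G) ⊗ ℚ` supported at the full subgroup:
its mark at `G` is `1` and its marks at all proper subgroups vanish. -/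
def IsTopIdem (x : BQ G) : Prop :=
  markMap x = fun d => if d = Subgroup.toConj (⊤ : Subgroup G) then 1 else 0

/-- `|N_G(H)/H|`. -/
def nuG (H : Subgroup G) : ℕ :=
  Nat.card (Subgroup.normalizer (H : Set G) ⧸ H.subgroupOf (Subgroup.normalizer (H : Set G)))


/-- The conjugation isomorphism `H → gHg⁻¹`, as a monoid homomorphism. -/
def conjHom (g : G) (H : Subgroup G) : ↥H →* ↥(conjSub g H) :=
  ((MulAut.conj g).toMonoidHom.comp H.subtype).codRestrict (conjSub g H)
    (fun h => Subgroup.mem_map_of_mem _ h.2)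

/-- Conjugation by an element of the normalizer of `H`, as an endomorphism of `H`. -/
def normConjHom (H : Subgroup G) (n : G) (hn : n ∈ Subgroup.normalizer (H : Set G)) : ↥H →* ↥H :=
  ((MulAut.conj n).toMonoidHom.comp H.subtype).codRestrict H
    (fun h => by simpa using (Subgroup.mem_normalizer_iff.mp hn ↑h).mp h.2)

/-!
The mark homomorphism sends `[G/K]` to the function `Δ ↦ |(G/K)^Δ|`. It is multiplicative:
the double coset formula is the decomposition of `G/A × G/B` into orbits, the orbit of the
double coset `BgA` being that of `(A, g⁻¹B)`, with stabilizer `A ∩ g⁻¹Bg`, and the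
`Δ`-fixed points of a product are the pairs of `Δ`-fixed points. It is injective because the
table of marks is triangular (`[G/K]` has a `Δ`-fixed point only if `Δ` is subconjugate to `K`)
with nonzero diagonal. Hence it is a ring isomorphism onto `ℚ^{classes}`, and the idempotents
are the preimages of the indicator functions of the conjugacy classes.
-/

abbrev FixedPts {M : Type*} (S : Set M) (X : Type*) [SMul M X] : Type _ :=
  {x : X // ∀ m ∈ S, m • x = x}

namespace FixedPts

variable {M X Y : Type*} [SMul M X] [SMul M Y] (S : Set M)

def congr (e : X ≃ Y) (he : ∀ (m : M) (x : X), e (m • x) = m • e x) :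
    FixedPts S X ≃ FixedPts S Y :=
  e.subtypeEquiv fun x => by simp only [← he, e.apply_eq_iff_eq]

def prodEquiv : FixedPts S (X × Y) ≃ FixedPts S X × FixedPts S Y where
  toFun p := (⟨p.1.1, fun m hm => congrArg Prod.fst (p.2 m hm)⟩,
    ⟨p.1.2, fun m hm => congrArg Prod.snd (p.2 m hm)⟩)
  invFun p := ⟨(p.1, p.2), fun m hm => Prod.ext (p.1.2 m hm) (p.2.2 m hm)⟩

def sigmaEquiv {ι : Type*} (X : ι → Type*) [∀ i, SMul M (X i)] :
    FixedPts S (Σ i, X i) ≃ Σ i, FixedPts S (X i) where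
  toFun p := ⟨p.1.1, p.1.2, fun m hm => eq_of_heq (Sigma.mk.inj_iff.mp (p.2 m hm)).2⟩
  invFun p := ⟨⟨p.1, p.2.1⟩, fun m hm => by rw [Sigma.smul_mk, p.2.2 m hm]⟩

end FixedPts

section Conjugation

variable {G : Type*} [Group G]

theorem mem_conjSub {g x : G} {K : Subgroup G} : x ∈ conjSub g K ↔ g⁻¹ * x * g ∈ K := by
  rw [conjSub, Subgroup.mem_map_equiv, MulAut.conj_symm_apply]

theorem conjSub_one (K : Subgroup G) : conjSub 1 K = K := by
  ext x
  rw [mem_conjSub, inv_one, one_mul, mul_one]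

theorem conjSub_inv_conjSub (g : G) (K : Subgroup G) : conjSub g⁻¹ (conjSub g K) = K := by
  ext x
  rw [mem_conjSub, mem_conjSub]
  group

theorem card_conjSub (g : G) (K : Subgroup G) : Nat.card (conjSub g K) = Nat.card K :=
  (Nat.card_congr (K.equivMapOfInjective _ (MulAut.conj g).injective).toEquiv).symm

theorem toConjAct_smul_eq_conjSub (g : G) (K : Subgroup G) :
    ConjAct.toConjAct g • K = conjSub g K :=
  rfl

theorem toConj_conjSub (g : G) (K : Subgroup G) : (conjSub g K).toConj = K.toConj :=
  Quotient.sound ⟨ConjAct.toConjAct g, toConjAct_smul_eq_conjSub g K⟩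

theorem exists_rep_toConj_eq_conjSub (K : Subgroup G) : ∃ g : G, K.toConj.rep = conjSub g K := by
  obtain ⟨γ, hγ⟩ := Quotient.mk_out (s := MulAction.orbitRel (ConjAct G) (Subgroup G)) K
  exact ⟨ConjAct.ofConjAct γ, hγ.symm⟩

theorem SubgroupConj.toConj_rep (c : SubgroupConj G) : c.rep.toConj = c :=
  Quotient.out_eq c

end Conjugation

section QuotientMulRight

variable {G : Type*} [Group G] {H B : Subgroup G}

def quotientMulRight (g : G) (h : H ≤ conjSub g B) : G ⧸ H → G ⧸ B :=
  Quotient.map' (· * g) fun x y hxy => by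
    rw [QuotientGroup.leftRel_apply] at hxy ⊢
    simpa [mul_assoc] using mem_conjSub.mp (h hxy)

theorem quotientMulRight_mk (g : G) (h : H ≤ conjSub g B) (x : G) :
    quotientMulRight g h (x : G ⧸ H) = (x * g : G) :=
  rfl

theorem quotientMulRight_smul (g : G) (h : H ≤ conjSub g B) (k : G) (x : G ⧸ H) :
    quotientMulRight g h (k • x) = k • quotientMulRight g h x := by
  induction x using QuotientGroup.induction_on with
  | H x => exact congrArg QuotientGroup.mk (mul_assoc k x g)

def quotientConjSubEquiv (g : G) (K : Subgroup G) : G ⧸ conjSub g K ≃ G ⧸ K where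
  toFun := quotientMulRight g le_rfl
  invFun := quotientMulRight g⁻¹ (conjSub_inv_conjSub g K).ge
  left_inv x := by
    induction x using QuotientGroup.induction_on with
    | H x => simp only [quotientMulRight_mk, mul_inv_cancel_right]
  right_inv x := by
    induction x using QuotientGroup.induction_on with
    | H x => simp only [quotientMulRight_mk, inv_mul_cancel_right]

theorem smul_mk_eq_mk_iff {K : Subgroup G} (k x : G) : k • (x : G ⧸ K) = x ↔ k ∈ conjSub x K := by
  rw [MulAction.Quotient.smul_mk, QuotientGroup.eq, mem_conjSub, ← K.inv_mem_iff, smul_eq_mul]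
  group

theorem nonempty_fixedPts_quotient_iff (S : Set G) (K : Subgroup G) :
    Nonempty (FixedPts S (G ⧸ K)) ↔ ∃ g : G, S ⊆ conjSub g K := by
  constructor
  · rintro ⟨⟨x, hx⟩⟩
    induction x using QuotientGroup.induction_on with
    | H x => exact ⟨x, fun k hk => (smul_mk_eq_mk_iff k x).mp (hx k hk)⟩
  · rintro ⟨g, hg⟩
    exact ⟨⟨g, fun k hk => (smul_mk_eq_mk_iff k g).mpr (hg hk)⟩⟩

theorem card_fixedPts_quotient_conjSub (S : Set G) (g : G) (K : Subgroup G) :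
    Nat.card (FixedPts S (G ⧸ conjSub g K)) = Nat.card (FixedPts S (G ⧸ K)) :=
  Nat.card_congr <| FixedPts.congr S (quotientConjSubEquiv g K) (quotientMulRight_smul g le_rfl)

end QuotientMulRight

section DoubleCoset

variable {G : Type*} [Group G] (A B : Subgroup G)

def sigmaQuotientInfToProd
    (p : Σ q : DoubleCoset.Quotient (B : Set G) (A : Set G), G ⧸ (A ⊓ conjSub q.out⁻¹ B)) :
    (G ⧸ A) × (G ⧸ B) :=
  (Subgroup.quotientMapOfLE inf_le_left p.2, quotientMulRight p.1.out⁻¹ inf_le_right p.2)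

theorem sigmaQuotientInfToProd_smul (k : G)
    (p : Σ q : DoubleCoset.Quotient (B : Set G) (A : Set G), G ⧸ (A ⊓ conjSub q.out⁻¹ B)) :
    sigmaQuotientInfToProd A B (k • p) = k • sigmaQuotientInfToProd A B p := by
  obtain ⟨q, x⟩ := p
  refine Prod.ext ?_ (quotientMulRight_smul q.out⁻¹ inf_le_right k x)
  induction x using QuotientGroup.induction_on
  rfl

theorem sigmaQuotientInfToProd_injective : Function.Injective (sigmaQuotientInfToProd A B) := by
  rintro ⟨q, x⟩ ⟨q', x'⟩ hxx'
  induction x using QuotientGroup.induction_on with | H x => ?_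
  induction x' using QuotientGroup.induction_on with | H x' => ?_
  simp only [sigmaQuotientInfToProd, Prod.ext_iff, Subgroup.quotientMapOfLE_apply_mk,
    quotientMulRight_mk, QuotientGroup.eq] at hxx'
  obtain ⟨hA, hB⟩ := hxx'
  obtain rfl : q = q' := by
    rw [← DoubleCoset.out_eq' B A q, ← DoubleCoset.out_eq' B A q', DoubleCoset.eq]
    exact ⟨_, B.inv_mem hB, _, hA, by group⟩
  refine Sigma.ext rfl (heq_of_eq (QuotientGroup.eq.mpr ⟨hA, mem_conjSub.mpr ?_⟩))
  convert hB using 1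
  group

theorem sigmaQuotientInfToProd_surjective :
    Function.Surjective (sigmaQuotientInfToProd A B) := by
  rintro ⟨u, v⟩
  induction u using QuotientGroup.induction_on with | H u => ?_
  induction v using QuotientGroup.induction_on with | H v => ?_
  set q := DoubleCoset.mk B A (v⁻¹ * u)
  obtain ⟨b, hb, a, ha, hq⟩ := (DoubleCoset.eq B A q.out (v⁻¹ * u)).mp (DoubleCoset.out_eq' B A q)
  have hu : u = v * (b * q.out * a) := by rw [← hq, mul_inv_cancel_left]
  refine ⟨⟨q, ((u * a⁻¹ : G) : G ⧸ (A ⊓ conjSub q.out⁻¹ B))⟩, Prod.ext ?_ ?_⟩ <;>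
    simp only [sigmaQuotientInfToProd, Subgroup.quotientMapOfLE_apply_mk, quotientMulRight_mk,
      QuotientGroup.eq]
  · convert ha using 1
    group
  · convert B.inv_mem hb using 1
    rw [hu]
    group

def sigmaQuotientInfEquivProd :
    (Σ q : DoubleCoset.Quotient (B : Set G) (A : Set G), G ⧸ (A ⊓ conjSub q.out⁻¹ B)) ≃
      (G ⧸ A) × (G ⧸ B) :=
  Equiv.ofBijective _
    ⟨sigmaQuotientInfToProd_injective A B, sigmaQuotientInfToProd_surjective A B⟩

theorem card_fixedPts_quotient_mul_eq_sum [Finite G] (S : Set G) :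
    Nat.card (FixedPts S (G ⧸ A)) * Nat.card (FixedPts S (G ⧸ B)) =
      ∑ q : DoubleCoset.Quotient (B : Set G) (A : Set G),
        Nat.card (FixedPts S (G ⧸ (A ⊓ conjSub q.out⁻¹ B))) := by
  rw [← Nat.card_prod, ← Nat.card_sigma]
  exact Nat.card_congr <| (FixedPts.prodEquiv S).symm.trans <|
    (FixedPts.congr S (sigmaQuotientInfEquivProd A B) (sigmaQuotientInfToProd_smul A B)).symm.trans
      (FixedPts.sigmaEquiv S _)

end DoubleCoset

section Marks

variable {G : Type*} [Group G]

theorem markBasis_eq_card (c d : SubgroupConj G) :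
    markBasis c d = Nat.card (FixedPts (d.rep : Set G) (G ⧸ c.rep)) :=
  rfl

theorem markBasis_toConj (K : Subgroup G) (d : SubgroupConj G) :
    markBasis K.toConj d = Nat.card (FixedPts (d.rep : Set G) (G ⧸ K)) := by
  obtain ⟨g, hg⟩ := exists_rep_toConj_eq_conjSub K
  rw [markBasis_eq_card, hg, card_fixedPts_quotient_conjSub]

theorem exists_le_conjSub_of_markBasis_ne_zero {c d : SubgroupConj G} (h : markBasis c d ≠ 0) :
    ∃ g : G, d.rep ≤ conjSub g c.rep := by
  rw [markBasis_eq_card, Nat.cast_ne_zero, Nat.card_ne_zero] at h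
  exact (nonempty_fixedPts_quotient_iff _ _).mp h.1

def markHom : BQ G →ₗ[ℚ] SubgroupConj G → ℚ :=
  Finsupp.linearCombination ℚ markBasis

theorem markHom_apply (x : BQ G) : markHom x = x.sum fun c a => a • markBasis c :=
  Finsupp.linearCombination_apply ℚ x

theorem markHom_single_one (c : SubgroupConj G) : markHom (Finsupp.single c 1) = markBasis c := by
  rw [markHom, Finsupp.linearCombination_single, one_smul]

theorem markHom_oneB : markHom (oneB : BQ G) = 1 := by
  funext d
  rw [oneB, markHom_single_one, markBasis_toConj, Pi.one_apply, Nat.cast_eq_one,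
    Nat.card_eq_one_iff_unique]
  have := QuotientGroup.subsingleton_quotient_top (G := G)
  refine ⟨inferInstance, (nonempty_fixedPts_quotient_iff _ _).mpr ⟨1, fun k _ => ?_⟩⟩
  rw [SetLike.mem_coe, conjSub_one]
  exact Subgroup.mem_top k

variable [Finite G]

theorem markBasis_self_ne_zero (c : SubgroupConj G) : markBasis c c ≠ 0 := by
  rw [markBasis_eq_card, Nat.cast_ne_zero, Nat.card_ne_zero]
  exact ⟨(nonempty_fixedPts_quotient_iff _ _).mpr ⟨1, (conjSub_one c.rep).ge⟩, inferInstance⟩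

theorem eq_of_le_conjSub_of_card_le {c d : SubgroupConj G} {g : G} (hle : d.rep ≤ conjSub g c.rep)
    (hcard : Nat.card c.rep ≤ Nat.card d.rep) : c = d := by
  have hd : d.rep = conjSub g c.rep := Subgroup.eq_of_le_of_card_ge hle (by rwa [card_conjSub])
  rw [← c.toConj_rep, ← d.toConj_rep, hd, toConj_conjSub]

theorem markHom_basisMul (c d : SubgroupConj G) :
    markHom (basisMul c d) = markBasis c * markBasis d := by
  funext e
  rw [basisMul, map_sum, Finset.sum_apply, Pi.mul_apply, markBasis_eq_card, markBasis_eq_card,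
    ← Nat.cast_mul, card_fixedPts_quotient_mul_eq_sum, Nat.cast_sum]
  refine Finset.sum_congr rfl fun q _ => ?_
  rw [markHom_single_one, markBasis_toConj]

theorem markHom_mulB (x y : BQ G) : markHom (mulB x y) = markHom x * markHom y := by
  rw [mulB, markHom_apply x, markHom_apply y, Finsupp.sum_mul]
  simp only [map_finsuppSum, map_smul, markHom_basisMul, Finsupp.mul_sum, smul_mul_smul_comm]

theorem markHom_apply_eq_of_forall_card_le {x : BQ G} {c : SubgroupConj G}
    (hmax : ∀ a ∈ x.support, Nat.card a.rep ≤ Nat.card c.rep) :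
    markHom x c = x c * markBasis c c := by
  rw [markHom_apply, Finsupp.sum, Finset.sum_apply, Finset.sum_eq_single c]
  · rfl
  · intro a ha hac
    rw [Pi.smul_apply, smul_eq_mul]
    refine mul_eq_zero_of_right _ ?_
    by_contra h
    obtain ⟨g, hle⟩ := exists_le_conjSub_of_markBasis_ne_zero h
    exact hac (eq_of_le_conjSub_of_card_le hle (hmax a ha))
  · intro hc
    rw [Finsupp.notMem_support_iff.mp hc, zero_smul, Pi.zero_apply]

theorem markHom_injective : Function.Injective (markHom (G := G)) := by
  refine (injective_iff_map_eq_zero markHom).mpr fun x hx => ?_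
  by_contra hne
  obtain ⟨c, hc, hmax⟩ := x.support.exists_max_image (fun a => Nat.card a.rep)
    (Finsupp.support_nonempty_iff.mpr hne)
  have hxc := congrFun hx c
  rw [markHom_apply_eq_of_forall_card_le hmax] at hxc
  exact mul_ne_zero (Finsupp.mem_support_iff.mp hc) (markBasis_self_ne_zero c) hxc

theorem markHom_surjective : Function.Surjective (markHom (G := G)) :=
  (LinearMap.injective_iff_surjective_of_finrank_eq_finrank (by simp)).mp markHom_injective

end Marks

/-- The rational Burnside ring of a finite group admits a complete set of orthogonal
idempotents indexed by the conjugacy classes of subgroups. -/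
theorem burnside_complete_orthogonal_idempotents (G : Type*) [Group G] [Finite G] :
    ∃ u : SubgroupConj G → BQ G,
      (∀ c d : SubgroupConj G, c ≠ d → mulB (u c) (u d) = 0) ∧
      (∀ c : SubgroupConj G, mulB (u c) (u c) = u c) ∧
      ∑ c : SubgroupConj G, u c = (oneB : BQ G) := by
  choose u hu using fun c : SubgroupConj G => markHom_surjective (Pi.single c (1 : ℚ))
  refine ⟨u, fun c d hcd => markHom_injective ?_, fun c => markHom_injective ?_,
    markHom_injective ?_⟩
  · rw [markHom_mulB, hu, hu, map_zero, ← Pi.single_mul_left, Pi.single_eq_of_ne hcd, mul_zero,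
      Pi.single_zero]
  · rw [markHom_mulB, hu, ← Pi.single_mul, mul_one]
  · rw [map_sum, markHom_oneB]
    simp only [hu]
    exact Finset.univ_sum_single 1

end
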